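/- For the perturbed walk with α > 1, for every a > 0 and r > 0, P_{(0,a)}(ρ > m) ≤ m^{−r} for all sufficiently large m; that is, the exit time from the axes has tails decaying faster than any polynomial. -/

import Mathlib

open MeasureTheory Filter Asymptotics
open scoped Classical ENNReal

noncomputable section

/-- The four open cones: both coordinates nonzero. -/
def coneK : Set (ℤ × ℤ) := {z | z.1 ≠ 0 ∧ z.2 ≠ 0}

/-- The axes (complement of the cones). -/
def axesKc : Set (ℤ × ℤ) := {z | z.1 = 0 ∨ z.2 = 0}

/-- Nearest-neighbour adjacency on `ℤ²`. -/
def adj (z w : ℤ × ℤ) : Prop := (w.1 - z.1).natAbs + (w.2 - z.2).natAbs = 1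

/-- Maximum norm on `ℤ²`. -/
def onorm (z : ℤ × ℤ) : ℕ := max z.1.natAbs z.2.natAbs

/-- Transition probabilities of the perturbed walk: simple random walk on the cones and
at the origin; on the axes, at distance `i > 0` from the origin, probability `1/(4 i^α)`
to step outward or sideways and `1 - 3/(4 i^α)` to step toward the origin. -/
noncomputable def q (α : ℝ) (z w : ℤ × ℤ) : ℝ :=
  if z.2 = 0 ∧ z.1 ≠ 0 then
    (if w = (z.1 + Int.sign z.1, 0) ∨ w = (z.1, 1) ∨ w = (z.1, -1) then
      1 / (4 * (z.1.natAbs : ℝ) ^ α)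
    else if w = (z.1 - Int.sign z.1, 0) then
      1 - 3 / (4 * (z.1.natAbs : ℝ) ^ α)
    else 0)
  else if z.1 = 0 ∧ z.2 ≠ 0 then
    (if w = (0, z.2 + Int.sign z.2) ∨ w = (1, z.2) ∨ w = (-1, z.2) then
      1 / (4 * (z.2.natAbs : ℝ) ^ α)
    else if w = (0, z.2 - Int.sign z.2) then
      1 - 3 / (4 * (z.2.natAbs : ℝ) ^ α)
    else 0)
  else (if adj z w then 1 / 4 else 0)

/-- A Markov chain on `ℤ²` with transition kernel `q α`: a family of probability
measures `P x` (the chain started at `x`) whose finite-dimensional distributions are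
products of the transition probabilities. -/
structure PerturbedWalk (α : ℝ) (Ω : Type*) [MeasurableSpace Ω] where
  X : ℕ → Ω → ℤ × ℤ
  P : ℤ × ℤ → Measure Ω
  meas : ∀ n, Measurable (X n)
  prob : ∀ x, IsProbabilityMeasure (P x)
  fdd : ∀ (x : ℤ × ℤ) (n : ℕ) (path : ℕ → ℤ × ℤ), path 0 = x →
    (P x {ω | ∀ i ≤ n, X i ω = path i}).toReal
      = ∏ i ∈ Finset.range n, q α (path i) (path (i + 1))

/-- `n` is the first time (after `0`) at which the walk is in the cones `K`;
i.e. `ρ = n` where `ρ` is the entrance time into `K`. -/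
def entersConeAt {Ω : Type*} (X : ℕ → Ω → ℤ × ℤ) (n : ℕ) (ω : Ω) : Prop :=
  0 < n ∧ X n ω ∈ coneK ∧ ∀ m, 0 < m → m < n → X m ω ∉ coneK

/-- `n` is the first time (after `0`) at which the walk is on the axes `K^c`;
i.e. `η = n` where `η` is the entrance time into `K^c`. -/
def entersAxesAt {Ω : Type*} (X : ℕ → Ω → ℤ × ℤ) (n : ℕ) (ω : Ω) : Prop :=
  0 < n ∧ X n ω ∈ axesKc ∧ ∀ m, 0 < m → m < n → X m ω ∉ axesKc

/-! On the axes, `V z = 2 ^ onorm z` (raised to `3` at the origin) is contracted by the walk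
killed on entering the cones: `∑_{w ∈ axes} q z w * V w ≤ 7/8 * V z`. Away from the origin the
walk steps outward along its axis with probability at most `1/4`, and the other step that keeps
it on the axes goes inward. By the supermartingale inequality along paths,
`P_x(ρ > m) ≤ (7/8)^m * V x`: the tail is exponential, in particular superpolynomial. -/

open Finset Topology

section PathSums

variable {β : Type*}

/-- Paths of length `m` from `x` whose steps `1, …, m` lie in `S`; they are frozen after time
`m`, so that such a path is determined by its first `m + 1` values. -/
def stayingPaths (x : β) (S : Set β) (m : ℕ) : Set (ℕ → β) :=
  {p | p 0 = x ∧ (∀ k, 0 < k → k ≤ m → p k ∈ S) ∧ ∀ i, m ≤ i → p i = p m}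

variable {x : β} {S : Set β} {m : ℕ} {p : ℕ → β}

lemma eq_const_of_mem_stayingPaths_zero (hp : p ∈ stayingPaths x S 0) : p = fun _ ↦ x := by
  funext i
  rw [hp.2.2 i i.zero_le, hp.1]

lemma shift_mem_stayingPaths (hp : p ∈ stayingPaths x S (m + 1)) :
    (fun i ↦ p (i + 1)) ∈ stayingPaths (p 1) S m :=
  ⟨rfl, fun k hk hkm ↦ hp.2.1 (k + 1) k.succ_pos (by omega),
    fun i hi ↦ hp.2.2 (i + 1) (by omega)⟩

lemma stayingPaths_countable [Countable β] (x : β) (S : Set β) (m : ℕ) :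
    (stayingPaths x S m).Countable := by
  refine (Set.mapsTo_univ (fun p (i : Fin (m + 1)) ↦ p i) _).countable_of_injOn ?_
    Set.countable_univ
  intro p hp p' hp' h
  have hle : ∀ i ≤ m, p i = p' i := fun i hi ↦ congrFun h ⟨i, by omega⟩
  funext i
  rcases le_or_gt i m with hi | hi
  · exact hle i hi
  · rw [hp.2.2 i hi.le, hp'.2.2 i hi.le, hle m le_rfl]

/-- The supermartingale inequality `E_x[V(X_m); X_1, …, X_m ∈ S] ≤ c^m V(x)`, written as a
bound on finite sums over paths. -/
theorem sum_pathWeight_mul_le_of_drift {k : β → β → ℝ} {V : β → ℝ} {c : ℝ}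
    (hk : ∀ z y, 0 ≤ k z y) (hV : ∀ y, 0 ≤ V y) (hc : 0 ≤ c)
    (hdrift : ∀ z ∈ S, ∀ Y : Finset β, (∀ y ∈ Y, y ∈ S) → ∑ y ∈ Y, k z y * V y ≤ c * V z)
    (m : ℕ) (hx : x ∈ S) (F : Finset (ℕ → β)) (hF : ∀ p ∈ F, p ∈ stayingPaths x S m) :
    ∑ p ∈ F, (∏ i ∈ range m, k (p i) (p (i + 1))) * V (p m) ≤ c ^ m * V x := by
  classical
  induction m generalizing x F with
  | zero =>
    have hF1 : F ⊆ {fun _ ↦ x} := fun p hp ↦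
      mem_singleton.2 (eq_const_of_mem_stayingPaths_zero (hF p hp))
    calc ∑ p ∈ F, (∏ i ∈ range 0, k (p i) (p (i + 1))) * V (p 0)
        ≤ ∑ p ∈ {fun _ ↦ x}, (∏ i ∈ range 0, k (p i) (p (i + 1))) * V (p 0) :=
          sum_le_sum_of_subset_of_nonneg hF1 fun p _ _ ↦ by simpa using hV _
      _ = c ^ 0 * V x := by simp
  | succ m ih =>
    set w : (ℕ → β) → ℝ := fun p ↦ (∏ i ∈ range m, k (p i) (p (i + 1))) * V (p m)
    set shift : (ℕ → β) → (ℕ → β) := fun p i ↦ p (i + 1)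
    have hsplit : ∀ p ∈ F, (∏ i ∈ range (m + 1), k (p i) (p (i + 1))) * V (p (m + 1))
        = k x (p 1) * w (shift p) := by
      intro p hp
      rw [prod_range_succ', (hF p hp).1]
      simp only [w, shift]
      ring
    have hS : ∀ y ∈ F.image (fun p : ℕ → β ↦ p 1), y ∈ S := by
      simp only [mem_image]
      rintro _ ⟨p, hp, rfl⟩
      exact (hF p hp).2.1 1 one_pos (by omega)
    have hfiber : ∀ y ∈ F.image (fun p : ℕ → β ↦ p 1),
        ∑ p ∈ F with p 1 = y, w (shift p) ≤ c ^ m * V y := by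
      intro y hy
      have hinj : Set.InjOn shift (F.filter (· 1 = y)) := by
        intro p hp p' hp' h
        funext i
        cases i with
        | zero => rw [(hF p (mem_filter.1 hp).1).1, (hF p' (mem_filter.1 hp').1).1]
        | succ i => exact congrFun h i
      rw [← sum_image hinj]
      refine ih (hS y hy) _ ?_
      simp only [mem_image, mem_filter]
      rintro _ ⟨p, ⟨hp, rfl⟩, rfl⟩
      exact shift_mem_stayingPaths (hF p hp)
    calc ∑ p ∈ F, (∏ i ∈ range (m + 1), k (p i) (p (i + 1))) * V (p (m + 1))
        = ∑ y ∈ F.image (fun p : ℕ → β ↦ p 1), ∑ p ∈ F with p 1 = y, k x y * w (shift p) := by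
          rw [sum_congr rfl hsplit,
            ← sum_fiberwise_of_maps_to (g := fun p : ℕ → β ↦ p 1) fun p ↦ mem_image_of_mem _]
          refine sum_congr rfl fun y _ ↦ sum_congr rfl fun p hp ↦ ?_
          rw [(mem_filter.1 hp).2]
      _ ≤ ∑ y ∈ F.image (fun p : ℕ → β ↦ p 1), k x y * (c ^ m * V y) := by
          refine sum_le_sum fun y hy ↦ ?_
          rw [← mul_sum]
          exact mul_le_mul_of_nonneg_left (hfiber y hy) (hk x y)
      _ = c ^ m * ∑ y ∈ F.image (fun p : ℕ → β ↦ p 1), k x y * V y := by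
          rw [mul_sum]
          exact sum_congr rfl fun y _ ↦ by ring
      _ ≤ c ^ m * (c * V x) := by
          refine mul_le_mul_of_nonneg_left (hdrift x hx _ hS) (pow_nonneg hc m)
      _ = c ^ (m + 1) * V x := by ring

end PathSums

namespace PerturbedWalk

variable {α : ℝ} {Ω : Type*} [MeasurableSpace Ω] (W : PerturbedWalk α Ω)

attribute [local instance] PerturbedWalk.prob

lemma ae_X_zero_eq (x : ℤ × ℤ) : ∀ᵐ ω ∂W.P x, W.X 0 ω = x := by
  have h : (W.P x {ω | W.X 0 ω = x}).toReal = 1 := by simpa using W.fdd x 0 (fun _ ↦ x) rfl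
  exact (prob_compl_eq_zero_iff (W.meas 0 (measurableSet_singleton x))).2
    ((ENNReal.toReal_eq_one_iff _).1 h)

theorem toReal_measure_stays_le (x : ℤ × ℤ) (S : Set (ℤ × ℤ)) (m : ℕ) {B : ℝ}
    (hB : ∀ F : Finset (ℕ → ℤ × ℤ), (∀ p ∈ F, p ∈ stayingPaths x S m) →
      ∑ p ∈ F, ∏ i ∈ range m, q α (p i) (p (i + 1)) ≤ B) :
    (W.P x {ω | ∀ k, 0 < k → k ≤ m → W.X k ω ∈ S}).toReal ≤ B := by
  set E := {ω | ∀ k, 0 < k → k ≤ m → W.X k ω ∈ S}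
  set cyl : (ℕ → ℤ × ℤ) → Set Ω := fun p ↦ {ω | ∀ i ≤ m, W.X i ω = p i}
  have hcover : E ∩ {ω | W.X 0 ω = x} ⊆ ⋃ p ∈ stayingPaths x S m, cyl p := by
    rintro ω ⟨hE, h0⟩
    refine Set.mem_biUnion (x := fun i ↦ W.X (min i m) ω) ⟨?_, ?_, ?_⟩ ?_
    · simpa using h0
    · intro k hk hkm
      simpa [min_eq_left hkm] using hE k hk hkm
    · intro i hi
      simp [min_eq_right hi]
    · intro i hi
      simp [min_eq_left hi]
  have hB0 : 0 ≤ B := by simpa using hB ∅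
  refine ENNReal.toReal_le_of_le_ofReal hB0 ?_
  calc W.P x E = W.P x (E ∩ {ω | W.X 0 ω = x}) :=
        (measure_inter_conull (W.ae_X_zero_eq x)).symm
    _ ≤ ∑' p : stayingPaths x S m, W.P x (cyl p) :=
        (measure_mono hcover).trans (measure_biUnion_le _ (stayingPaths_countable x S m) cyl)
    _ ≤ ENNReal.ofReal B := by
        rw [ENNReal.tsum_eq_iSup_sum]
        refine iSup_le fun F ↦ ?_
        have hF : ∀ p ∈ F.map (Function.Embedding.subtype _), p ∈ stayingPaths x S m := by
          simp only [Finset.mem_map, Function.Embedding.subtype_apply]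
          rintro _ ⟨p, -, rfl⟩
          exact p.2
        rw [← ENNReal.ofReal_toReal (ENNReal.sum_ne_top.2 fun p _ ↦ measure_ne_top _ _),
          ENNReal.toReal_sum fun p _ ↦ measure_ne_top _ _]
        refine ENNReal.ofReal_le_ofReal (le_trans (le_of_eq ?_) (hB _ hF))
        rw [sum_map]
        exact sum_congr rfl fun p _ ↦ W.fdd x m p p.2.1

end PerturbedWalk

lemma Int.sign_cases (b : ℤ) : b < 0 ∧ b.sign = -1 ∨ b = 0 ∧ b.sign = 0 ∨ 0 < b ∧ b.sign = 1 := by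
  rcases lt_trichotomy b 0 with h | h | h
  · exact Or.inl ⟨h, Int.sign_eq_neg_one_of_neg h⟩
  · exact Or.inr (Or.inl ⟨h, by simp [h]⟩)
  · exact Or.inr (Or.inr ⟨h, Int.sign_eq_one_of_pos h⟩)

lemma Finset.sum_le_sum_of_eq_zero_off {ι M : Type*} [AddCommMonoid M] [PartialOrder M]
    [IsOrderedAddMonoid M] {s t : Finset ι} {f : ι → M} (hf : ∀ i ∈ s, i ∉ t → f i = 0)
    (ht : ∀ i ∈ t, 0 ≤ f i) : ∑ i ∈ s, f i ≤ ∑ i ∈ t, f i := by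
  classical
  calc ∑ i ∈ s, f i = ∑ i ∈ s ∩ t, f i :=
        (sum_subset inter_subset_left fun i hs hst ↦
          hf i hs fun h ↦ hst (mem_inter.2 ⟨hs, h⟩)).symm
    _ ≤ ∑ i ∈ t, f i := sum_le_sum_of_subset_of_nonneg inter_subset_right fun i hi _ ↦ ht i hi

section Lyapunov

variable {α : ℝ}

lemma q_nonneg (hα : 0 ≤ α) (z w : ℤ × ℤ) : 0 ≤ q α z w := by
  have key : ∀ b : ℤ, b ≠ 0 → 0 ≤ 1 - 3 / (4 * (b.natAbs : ℝ) ^ α) := fun b hb ↦ by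
    have : 1 ≤ (b.natAbs : ℝ) ^ α := Real.one_le_rpow (by exact_mod_cast Int.natAbs_pos.2 hb) hα
    rw [sub_nonneg, div_le_one (by positivity)]
    linarith
  unfold q
  split_ifs with h1 _ _ h2 <;> first | positivity | exact key _ h1.2 | exact key _ h2.2

lemma q_swap (α : ℝ) (z w : ℤ × ℤ) : q α z.swap w.swap = q α z w := by
  obtain ⟨z1, z2⟩ := z
  obtain ⟨w1, w2⟩ := w
  have := z1.sign_cases
  have := z2.sign_cases
  simp only [q, adj, Prod.swap_prod_mk, Prod.mk.injEq, add_comm (w2 - z2).natAbs]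
  split_ifs <;> first | rfl | omega | simp [*]

lemma q_origin (α : ℝ) (w : ℤ × ℤ) : q α 0 w = if adj 0 w then 1 / 4 else 0 := by
  simp [q]

lemma q_xAxis_eq_zero {b : ℤ} (hb : b ≠ 0) {w : ℤ × ℤ} (hw : w ∈ axesKc)
    (hup : w ≠ (b + b.sign, 0)) (hdown : w ≠ (b - b.sign, 0)) : q α (b, 0) w = 0 := by
  obtain ⟨w1, w2⟩ := w
  have := b.sign_cases
  simp only [axesKc, Set.mem_ofPred_eq] at hw
  rw [q, if_pos ⟨rfl, hb⟩]
  simp only [ne_eq, Prod.mk.injEq] at *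
  split_ifs <;> first | rfl | omega

lemma q_xAxis_up {b : ℤ} (hb : b ≠ 0) :
    q α (b, 0) (b + b.sign, 0) = 1 / (4 * (b.natAbs : ℝ) ^ α) := by
  rw [q, if_pos ⟨rfl, hb⟩, if_pos (Or.inl rfl)]

lemma q_xAxis_down {b : ℤ} (hb : b ≠ 0) :
    q α (b, 0) (b - b.sign, 0) = 1 - 3 / (4 * (b.natAbs : ℝ) ^ α) := by
  have := b.sign_cases
  rw [q, if_pos ⟨rfl, hb⟩, if_neg (by simp only [Prod.mk.injEq]; omega), if_pos rfl]

/-- A Lyapunov function for the walk killed on leaving the axes; the value at the origin is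
raised from `2 ^ 0` to `3` because the walk cannot leave the axes in one step from there. -/
def axesLyapunov (z : ℤ × ℤ) : ℝ := if z = 0 then 3 else 2 ^ onorm z

lemma one_le_axesLyapunov (z : ℤ × ℤ) : 1 ≤ axesLyapunov z := by
  unfold axesLyapunov
  split_ifs
  · norm_num
  · exact one_le_pow₀ (by norm_num)

lemma axesLyapunov_swap (z : ℤ × ℤ) : axesLyapunov z.swap = axesLyapunov z := by
  obtain ⟨z1, z2⟩ := z
  simp [axesLyapunov, onorm, max_comm, and_comm]

lemma axesLyapunov_xAxis (b : ℤ) : axesLyapunov (b, 0) = if b = 0 then 3 else 2 ^ b.natAbs := by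
  simp [axesLyapunov, onorm]

lemma axesKc_swap {z : ℤ × ℤ} (hz : z ∈ axesKc) : z.swap ∈ axesKc := hz.symm

lemma sum_q_origin_mul_axesLyapunov_le (Y : Finset (ℤ × ℤ)) :
    ∑ y ∈ Y, q α 0 y * axesLyapunov y ≤ 7 / 8 * axesLyapunov 0 := by
  calc ∑ y ∈ Y, q α 0 y * axesLyapunov y
      ≤ ∑ y ∈ {(1, 0), (-1, 0), (0, 1), (0, -1)}, q α 0 y * axesLyapunov y := by
        refine sum_le_sum_of_eq_zero_off (fun y _ hy ↦ ?_) fun y _ ↦ ?_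
        · obtain ⟨y1, y2⟩ := y
          simp only [mem_insert, mem_singleton, Prod.mk.injEq, not_or] at hy
          have : ¬adj 0 (y1, y2) := by
            simp only [adj, Prod.fst_zero, Prod.snd_zero, sub_zero]; omega
          rw [q_origin, if_neg this, zero_mul]
        · rw [q_origin]
          split_ifs <;> linarith [one_le_axesLyapunov y]
    _ ≤ 7 / 8 * axesLyapunov 0 := by
        norm_num [q_origin, adj, axesLyapunov, onorm]

lemma sum_q_xAxis_mul_axesLyapunov_le (hα : 0 ≤ α) {b : ℤ} (hb : b ≠ 0) {Y : Finset (ℤ × ℤ)}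
    (hY : ∀ y ∈ Y, y ∈ axesKc) :
    ∑ y ∈ Y, q α (b, 0) y * axesLyapunov y ≤ 7 / 8 * axesLyapunov (b, 0) := by
  have := b.sign_cases
  have hpair : ((b + b.sign, 0) : ℤ × ℤ) ≠ (b - b.sign, 0) := by
    simp only [ne_eq, Prod.mk.injEq]; omega
  have hup : (b + b.sign).natAbs = b.natAbs + 1 := by omega
  set n := b.natAbs
  set t := 1 / (4 * (n : ℝ) ^ α)
  have hnα : 1 ≤ (n : ℝ) ^ α := Real.one_le_rpow (by exact_mod_cast Int.natAbs_pos.2 hb) hα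
  have ht : 0 ≤ t ∧ t ≤ 1 / 4 := ⟨by positivity, by
    rw [div_le_div_iff₀ (by positivity) (by norm_num)]; linarith⟩
  have hq_down : 1 - 3 / (4 * (n : ℝ) ^ α) = 1 - 3 * t := by ring
  calc ∑ y ∈ Y, q α (b, 0) y * axesLyapunov y
      ≤ ∑ y ∈ {(b + b.sign, 0), (b - b.sign, 0)}, q α (b, 0) y * axesLyapunov y :=
        sum_le_sum_of_eq_zero_off
          (fun y hy hy' ↦ by
            rw [q_xAxis_eq_zero hb (hY y hy) (fun h ↦ hy' (by simp [h]))
              (fun h ↦ hy' (by simp [h])), zero_mul])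
          fun y _ ↦ mul_nonneg (q_nonneg hα _ _) (zero_le_one.trans (one_le_axesLyapunov y))
    _ = t * 2 ^ (n + 1) + (1 - 3 * t) * axesLyapunov (b - b.sign, 0) := by
        rw [sum_pair hpair, q_xAxis_up hb, q_xAxis_down hb, hq_down, axesLyapunov_xAxis (b + _),
          if_neg (by omega), hup]
    _ ≤ 7 / 8 * 2 ^ n := by
        rw [axesLyapunov_xAxis]
        rcases (by omega : n = 1 ∨ 2 ≤ n) with h1 | h2
        · -- at distance 1 the walk is simple, and the inward step hits the origin
          have ht1 : t = 1 / 4 := by simp [t, h1]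
          rw [if_pos (by omega), ht1, h1]
          norm_num
        · obtain ⟨j, hj⟩ : ∃ j, n = j + 2 := ⟨n - 2, by omega⟩
          have hdown : (b - b.sign).natAbs = j + 1 := by omega
          rw [if_neg (by omega), hdown, hj, pow_succ, pow_succ, pow_succ]
          nlinarith [ht.1, ht.2, pow_pos (two_pos : (0 : ℝ) < 2) j]
    _ = 7 / 8 * axesLyapunov (b, 0) := by rw [axesLyapunov_xAxis, if_neg hb]

theorem sum_q_mul_axesLyapunov_le (hα : 0 ≤ α) {x : ℤ × ℤ} (hx : x ∈ axesKc)
    {Y : Finset (ℤ × ℤ)} (hY : ∀ y ∈ Y, y ∈ axesKc) :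
    ∑ y ∈ Y, q α x y * axesLyapunov y ≤ 7 / 8 * axesLyapunov x := by
  obtain ⟨x1, x2⟩ := x
  rcases hx with (rfl : x1 = 0) | (rfl : x2 = 0)
  · rcases eq_or_ne x2 0 with rfl | hb
    · exact sum_q_origin_mul_axesLyapunov_le Y
    calc ∑ y ∈ Y, q α (0, x2) y * axesLyapunov y
        = ∑ y ∈ Y.image Prod.swap, q α (x2, 0) y * axesLyapunov y := by
          rw [sum_image Prod.swap_injective.injOn]
          exact sum_congr rfl fun y _ ↦ by rw [← q_swap, axesLyapunov_swap]; rfl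
      _ ≤ 7 / 8 * axesLyapunov (0, x2) := by
          rw [← axesLyapunov_swap]
          refine sum_q_xAxis_mul_axesLyapunov_le hα hb ?_
          simp only [mem_image]
          rintro _ ⟨y, hy, rfl⟩
          exact axesKc_swap (hY y hy)
  · rcases eq_or_ne x1 0 with rfl | hb
    · exact sum_q_origin_mul_axesLyapunov_le Y
    · exact sum_q_xAxis_mul_axesLyapunov_le hα hb hY

end Lyapunov

theorem PerturbedWalk.toReal_measure_stays_on_axes_le {α : ℝ} (hα : 0 ≤ α) {Ω : Type*}
    [MeasurableSpace Ω] (W : PerturbedWalk α Ω) {x : ℤ × ℤ} (hx : x ∈ axesKc) (m : ℕ) :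
    (W.P x {ω | ∀ k, 0 < k → k ≤ m → W.X k ω ∈ axesKc}).toReal
      ≤ (7 / 8) ^ m * axesLyapunov x := by
  refine W.toReal_measure_stays_le x axesKc m fun F hF ↦ ?_
  calc ∑ p ∈ F, ∏ i ∈ range m, q α (p i) (p (i + 1))
      ≤ ∑ p ∈ F, (∏ i ∈ range m, q α (p i) (p (i + 1))) * axesLyapunov (p m) :=
        sum_le_sum fun p _ ↦ le_mul_of_one_le_right
          (prod_nonneg fun i _ ↦ q_nonneg hα _ _) (one_le_axesLyapunov _)
    _ ≤ (7 / 8) ^ m * axesLyapunov x :=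
        sum_pathWeight_mul_le_of_drift (q_nonneg hα)
          (fun y ↦ zero_le_one.trans (one_le_axesLyapunov y)) (by norm_num)
          (fun _ hz _ hY ↦ sum_q_mul_axesLyapunov_le hα hz hY) m hx F hF

lemma eventually_const_mul_pow_le_rpow_neg {c : ℝ} (hc₀ : 0 ≤ c) (hc₁ : c < 1) (L r : ℝ) :
    ∀ᶠ m : ℕ in atTop, c ^ m * L ≤ (m : ℝ) ^ (-r) := by
  set K := ⌈r⌉₊
  have hlim : Tendsto (fun m : ℕ ↦ (m : ℝ) ^ K * c ^ m * L) atTop (𝓝 (0 * L)) :=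
    (tendsto_pow_const_mul_const_pow_of_lt_one K hc₀ hc₁).mul_const L
  rw [zero_mul] at hlim
  filter_upwards [hlim.eventually_lt_const one_pos, eventually_ge_atTop 1] with m hm hm1
  have hm1 : (1 : ℝ) ≤ m := by exact_mod_cast hm1
  have hmK : 0 < (m : ℝ) ^ K := by positivity
  calc c ^ m * L ≤ ((m : ℝ) ^ K)⁻¹ := by
        rw [← one_div, le_div_iff₀ hmK]
        linarith
    _ = (m : ℝ) ^ (-(K : ℝ)) := by rw [Real.rpow_neg (by positivity), Real.rpow_natCast]
    _ ≤ (m : ℝ) ^ (-r) := Real.rpow_le_rpow_of_exponent_le hm1 (neg_le_neg (Nat.le_ceil r))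

theorem exit_time_superpolynomial_tail_general (α : ℝ) (hα : 1 < α)
    {Ω : Type*} [MeasurableSpace Ω] (W : PerturbedWalk α Ω)
    (a : ℤ) (r : ℝ) :
    ∀ᶠ m : ℕ in atTop,
      (W.P (0, a) {ω | ∀ k, 0 < k → k ≤ m → W.X k ω ∈ axesKc}).toReal
        ≤ (m : ℝ) ^ (-r) := by
  filter_upwards [eventually_const_mul_pow_le_rpow_neg (c := 7 / 8) (by norm_num) (by norm_num)
    (axesLyapunov (0, a)) r] with m hm
  exact (W.toReal_measure_stays_on_axes_le (by linarith) (Or.inl rfl) m).trans hm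

/-- For `α > 1`, starting from `(0,a)` with `a > 0`, the exit time `ρ` from the axes has
tails decaying faster than any polynomial: for any `r > 0`, `P_{(0,a)}(ρ > m) ≤ m^{-r}`
for all large `m`. -/
theorem exit_time_superpolynomial_tail (α : ℝ) (hα : 1 < α)
    {Ω : Type*} [MeasurableSpace Ω] (W : PerturbedWalk α Ω)
    (a : ℤ) (ha : 0 < a) (r : ℝ) (hr : 0 < r) :
    ∀ᶠ m : ℕ in atTop,
      (W.P (0, a) {ω | ∀ k, 0 < k → k ≤ m → W.X k ω ∈ axesKc}).toReal
        ≤ (m : ℝ) ^ (-r) :=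
  exit_time_superpolynomial_tail_general α hα W a r

end
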